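/- arXiv:2206.02113 — 2 statements merged into one kernel-verified Lean document; each statement's English description precedes it below -/
import Mathlib

section
/- Let p be an odd prime, F a finite field of characteristic p, G a finite p-group, and ◇ an involution of FG arising from an anti-automorphism of G. Then the map f(x) = (1-x)(1+x)^{-1} is a bijection between the set FG⁻_◇ of skew-symmetric elements of FG and the ◇-unitary subgroup V_◇(FG). -/
noncomputable def aug (F G : Type*) [CommSemiring F] [Monoid G] :
    MonoidAlgebra F G →ₐ[F] F := MonoidAlgebra.lift (R := F) (M := G) (A := F) 1

noncomputable def dia {F G : Type*} [Semiring F] (σ : G → G) :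
    MonoidAlgebra F G → MonoidAlgebra F G := fun x => MonoidAlgebra.ofCoeff (Finsupp.mapDomain σ x.coeff)

/-! ### Generic ring lemmas -/

section RingLemmas

variable {R : Type*} [Ring R]

lemma invUnique {a b c : R} (h2 : b * a = 1) (h3 : a * c = 1) : b = c := by
  calc b = b * (a * c) := by rw [h3, mul_one]
  _ = b * a * c := by rw [mul_assoc]
  _ = c := by rw [h2, one_mul]

lemma commute_of_inv {a b c : R} (h : Commute a b) (h1 : b * c = 1) (h2 : c * b = 1) :
    Commute a c := by
  have key : a * c = c * a := by
    calc a * c = (c * b) * (a * c) := by rw [h2, one_mul]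
    _ = c * (b * (a * c)) := by rw [mul_assoc]
    _ = c * ((b * a) * c) := by rw [← mul_assoc b a c]
    _ = c * ((a * b) * c) := by rw [← h.eq]
    _ = c * (a * (b * c)) := by rw [mul_assoc a b c]
    _ = c * (a * 1) := by rw [h1]
    _ = c * a := by rw [mul_one]
  exact key

/-- The Cayley transform is an involution wherever `1 + y` is invertible. -/
lemma cayley_invol (h2 : IsUnit (2 : R)) {y : R} (hu : IsUnit (1 + y)) :
    (1 - (1 - y) * Ring.inverse (1 + y)) * Ring.inverse (1 + (1 - y) * Ring.inverse (1 + y))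
      = y := by
  set v := Ring.inverse (1 + y) with hv
  have hv1 : (1 + y) * v = 1 := Ring.mul_inverse_cancel _ hu
  have hvu : IsUnit v := isUnit_ringInverse.mpr hu
  have e1 : 1 + (1 - y) * v = 2 * v := by
    calc 1 + (1 - y) * v = (1 + y) * v + (1 - y) * v := by rw [hv1]
    _ = 2 * v := by noncomm_ring
  have hA : 1 - (1 - y) * v = y * (1 + (1 - y) * v) := by
    calc 1 - (1 - y) * v = (1 + y) * v - (1 - y) * v := by rw [hv1]
    _ = y * ((1 + y) * v + (1 - y) * v) := by noncomm_ring
    _ = y * (1 + (1 - y) * v) := by rw [hv1]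
  have hxu : IsUnit (1 + (1 - y) * v) := by rw [e1]; exact h2.mul hvu
  calc (1 - (1 - y) * v) * Ring.inverse (1 + (1 - y) * v)
      = y * ((1 + (1 - y) * v) * Ring.inverse (1 + (1 - y) * v)) := by rw [hA, mul_assoc]
  _ = y := by rw [Ring.mul_inverse_cancel _ hxu, mul_one]

end RingLemmas

/-! ### Lemmas about `aug` -/

section AugLemmas

lemma aug_sum {F G : Type*} [CommSemiring F] [Monoid G] (x : MonoidAlgebra F G) :
    aug F G x = x.coeff.sum fun _ c => c := by
  rw [aug, MonoidAlgebra.lift_apply]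
  simp [smul_eq_mul]

lemma aug_mapDomain {F G H : Type*} [CommSemiring F] [Monoid G] [Monoid H] (f : G → H)
    (x : MonoidAlgebra F G) : aug F H (MonoidAlgebra.mapDomain f x) = aug F G x := by
  rw [aug_sum, aug_sum]
  exact Finsupp.sum_mapDomain_index (fun _ => rfl) (fun _ _ _ => rfl)

lemma aug_single {F G : Type*} [CommSemiring F] [Monoid G] (g : G) (c : F) :
    aug F G (MonoidAlgebra.single g c) = c := by
  rw [aug_sum, MonoidAlgebra.coeff_single]
  exact Finsupp.sum_single_index rfl

end AugLemmas

/-! ### Lemmas about `dia` -/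

section DiaLemmas

variable {F G : Type*} [Field F] [Group G] (σ : G → G)

lemma dia_hom_eq (x : MonoidAlgebra F G) :
    dia σ x = MonoidAlgebra.ofCoeff (Finsupp.mapDomain.addMonoidHom σ x.coeff) := rfl

lemma dia_add (a b : MonoidAlgebra F G) : dia σ (a + b) = dia σ a + dia σ b :=
  MonoidAlgebra.mapDomain_add σ a b

lemma dia_neg (a : MonoidAlgebra F G) : dia σ (-a) = -dia σ a := by
  rw [dia_hom_eq, dia_hom_eq, MonoidAlgebra.coeff_neg, map_neg, MonoidAlgebra.ofCoeff_neg]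

lemma dia_sub (a b : MonoidAlgebra F G) : dia σ (a - b) = dia σ a - dia σ b := by
  rw [dia_hom_eq, dia_hom_eq, dia_hom_eq, MonoidAlgebra.coeff_sub, map_sub, MonoidAlgebra.ofCoeff_sub]

lemma dia_smul (r : F) (a : MonoidAlgebra F G) : dia σ (r • a) = r • dia σ a :=
  congrArg MonoidAlgebra.ofCoeff (Finsupp.mapDomain_smul r a.coeff)

lemma dia_single (g : G) (c : F) :
    dia σ (MonoidAlgebra.single g c) = MonoidAlgebra.single (σ g) c :=
  MonoidAlgebra.mapDomain_single

lemma sigma_one (hanti : ∀ a b : G, σ (a * b) = σ b * σ a) : σ 1 = 1 := by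
  have h : σ 1 = σ 1 * σ 1 := by
    have := hanti 1 1
    rwa [mul_one] at this
  have h2 : σ 1 * 1 = σ 1 * σ 1 := by rw [mul_one]; exact h
  exact (mul_left_cancel h2).symm

lemma dia_one (hanti : ∀ a b : G, σ (a * b) = σ b * σ a) :
    dia σ (1 : MonoidAlgebra F G) = 1 := by
  rw [MonoidAlgebra.one_def, dia_single, sigma_one σ hanti]

lemma dia_mul (hanti : ∀ a b : G, σ (a * b) = σ b * σ a) (a b : MonoidAlgebra F G) :
    dia σ (a * b) = dia σ b * dia σ a := by
  induction a using MonoidAlgebra.induction_on with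
  | of g =>
    induction b using MonoidAlgebra.induction_on with
    | of h =>
      simp [MonoidAlgebra.of_apply, MonoidAlgebra.single_mul_single, dia_single, hanti]
    | add b1 b2 h1 h2 => rw [mul_add, dia_add, dia_add, h1, h2, add_mul]
    | smul r b hb => rw [mul_smul_comm, dia_smul, dia_smul, hb, smul_mul_assoc]
  | add a1 a2 h1 h2 => rw [add_mul, dia_add, dia_add, h1, h2, mul_add]
  | smul r a ha => rw [smul_mul_assoc, dia_smul, dia_smul, ha, mul_smul_comm]

end DiaLemmas

/-! ### Nilpotency of the augmentation ideal -/

lemma nil_of_aug_eq_zero (p : ℕ) (hp : p.Prime) (F : Type*) [Field F] [CharP F p] :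
    ∀ (n : ℕ) (G : Type*) [Group G] [Fintype G], Fintype.card G ≤ n → IsPGroup p G →
      ∀ x : MonoidAlgebra F G, aug F G x = 0 → IsNilpotent x := by
  haveI : Fact p.Prime := ⟨hp⟩
  intro n
  induction n with
  | zero =>
    intro G _ _ hcard _ _ _
    exact absurd (Nat.le_zero.mp hcard) Fintype.card_ne_zero
  | succ n ih =>
    intro G _ _ hcard hG x hx
    by_cases htriv : ∀ g : G, g = 1
    · have hxe : x = MonoidAlgebra.single (1 : G) (x.coeff 1) := by
        ext g
        rw [htriv g]
        exact (Finsupp.single_eq_same).symm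
      rw [hxe] at hx
      rw [aug_single] at hx
      have hz : MonoidAlgebra.single (1 : G) (0 : F) = 0 := MonoidAlgebra.single_zero 1
      rw [hxe, hx, hz]
      exact IsNilpotent.zero
    · push_neg at htriv
      obtain ⟨g₁, hg₁⟩ := htriv
      haveI : Nontrivial G := ⟨⟨g₁, 1, hg₁⟩⟩
      haveI : Nontrivial (Subgroup.center G) := hG.center_nontrivial
      haveI : Fintype (Subgroup.center G) := Fintype.ofFinite _
      have hdvd : p ∣ Fintype.card (Subgroup.center G) := by
        obtain ⟨k, hk⟩ := IsPGroup.iff_card.mp (hG.to_subgroup (Subgroup.center G))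
        rw [Nat.card_eq_fintype_card] at hk
        rcases k with _ | k
        · rw [pow_zero] at hk
          exact absurd hk Fintype.one_lt_card.ne'
        · rw [hk]
          exact dvd_pow_self p k.succ_ne_zero
      obtain ⟨z₀, hz₀⟩ := exists_prime_orderOf_dvd_card p hdvd
      set z : G := (z₀ : G) with hzdef
      have hzc : z ∈ Subgroup.center G := z₀.2
      have hzord : orderOf z = p := by rw [Subgroup.orderOf_coe]; exact hz₀
      have hzp : z ^ p = 1 := by rw [← hzord]; exact pow_orderOf_eq_one z
      set N := Subgroup.zpowers z with hN
      have hNle : N ≤ Subgroup.center G := Subgroup.zpowers_le.mpr hzc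
      haveI hNn : N.Normal := ⟨fun m hm g => by
        have hc : g * m = m * g := (Subgroup.mem_center_iff.mp (hNle hm)) g
        rw [hc, mul_inv_cancel_right]; exact hm⟩
      haveI : Fintype (G ⧸ N) := Fintype.ofFinite _
      have hQ : IsPGroup p (G ⧸ N) := hG.to_quotient N
      have hcardQ : Fintype.card (G ⧸ N) ≤ n := by
        have h1 : Nat.card G = Nat.card (G ⧸ N) * Nat.card N :=
          Subgroup.card_eq_card_quotient_mul_card_subgroup N
        have h2 : Nat.card N = p := by rw [hN, Nat.card_zpowers, hzord]
        have h3 : 2 ≤ p := hp.two_le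
        have h4 : 0 < Nat.card (G ⧸ N) := Nat.card_pos
        rw [h2] at h1
        rw [Nat.card_eq_fintype_card, Nat.card_eq_fintype_card] at h1
        rw [Nat.card_eq_fintype_card] at h4
        have h5 : Fintype.card (G ⧸ N) * 2 ≤ Fintype.card (G ⧸ N) * p :=
          Nat.mul_le_mul_left _ h3
        omega
      set π := MonoidAlgebra.mapDomainAlgHom F F (QuotientGroup.mk' N) with hπ
      have hπd : ∀ w : MonoidAlgebra F G,
          π w = MonoidAlgebra.mapDomain (⇑(QuotientGroup.mk' N)) w := fun w => rfl
      have haugπ : aug F (G ⧸ N) (π x) = 0 := by rw [hπd, aug_mapDomain]; exact hx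
      obtain ⟨m, hm⟩ := ih (G ⧸ N) hcardQ hQ (π x) haugπ
      have hπxm : π (x ^ m) = 0 := by rw [map_pow, hm]
      set t : MonoidAlgebra F G := MonoidAlgebra.single z 1 with ht
      have htc : ∀ a : MonoidAlgebra F G, Commute t a := by
        intro a
        induction a using MonoidAlgebra.induction_on with
        | of g =>
          show t * _ = _ * t
          rw [MonoidAlgebra.of_apply, ht, MonoidAlgebra.single_mul_single,
            MonoidAlgebra.single_mul_single, Subgroup.mem_center_iff.mp hzc g]
        | add a1 a2 h1 h2 => exact h1.add_right h2
        | smul r a ha => exact ha.smul_right r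
      have hker : ∀ y : MonoidAlgebra F G, π y = 0 → ∃ a, y = (t - 1) * a := by
        set S : MonoidAlgebra F (G ⧸ N) → MonoidAlgebra F G :=
          fun w => MonoidAlgebra.mapDomain (Quotient.out : G ⧸ N → G) w with hSdef
        have hS_single : ∀ (q : G ⧸ N) (c : F),
            S (MonoidAlgebra.single q c) = MonoidAlgebra.single (Quotient.out q) c := by
          intro q c
          simp only [hSdef]
          exact MonoidAlgebra.mapDomain_single
        have hS_add : ∀ a b, S (a + b) = S a + S b := by
          intro a b
          simp only [hSdef]
          exact MonoidAlgebra.mapDomain_add _ _ _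
        have hS_smul : ∀ (r : F) a, S (r • a) = r • S a := by
          intro r a
          simp only [hSdef]
          exact congrArg MonoidAlgebra.ofCoeff (Finsupp.mapDomain_smul r a.coeff)
        have hS_zero : S 0 = 0 := by
          simp only [hSdef]
          exact MonoidAlgebra.mapDomain_zero _
        have key : ∀ y : MonoidAlgebra F G, ∃ a, y - S (π y) = (t - 1) * a := by
          intro y
          induction y using MonoidAlgebra.induction_on with
          | of g =>
            set g₀ : G := Quotient.out (((QuotientGroup.mk' N) g : G ⧸ N)) with hg₀
            have hofg : π ((MonoidAlgebra.of F G) g)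
                = MonoidAlgebra.single ((QuotientGroup.mk' N) g) 1 := by
              rw [MonoidAlgebra.of_apply, hπd]
              exact MonoidAlgebra.mapDomain_single
            have hSofg : S (π ((MonoidAlgebra.of F G) g)) = MonoidAlgebra.single g₀ 1 := by
              rw [hofg, hS_single]
            rw [MonoidAlgebra.of_apply] at hSofg ⊢
            rw [hSofg]
            have hmem : g₀⁻¹ * g ∈ N := by
              have h := QuotientGroup.out_eq' ((QuotientGroup.mk' N) g)
              rw [QuotientGroup.mk'_apply] at h
              exact QuotientGroup.eq.mp h
            have hfin : IsOfFinOrder z :=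
              orderOf_pos_iff.mp (by rw [hzord]; exact hp.pos)
            have hmem' : g₀⁻¹ * g ∈ Submonoid.powers z :=
              hfin.mem_powers_iff_mem_zpowers.mpr hmem
            obtain ⟨j, hj⟩ := hmem'
            have hj' : z ^ j = g₀⁻¹ * g := hj
            have hg : g₀ * z ^ j = g := by rw [hj', mul_inv_cancel_left]
            refine ⟨MonoidAlgebra.single g₀ 1 * (∑ i ∈ Finset.range j, t ^ i), ?_⟩
            have hgeo : (t - 1) * (∑ i ∈ Finset.range j, t ^ i) = t ^ j - 1 := by
              rw [((htc _).sub_left (Commute.one_left _)).eq, geom_sum_mul]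
            have htj : t ^ j = MonoidAlgebra.single (z ^ j) 1 := by
              rw [ht, MonoidAlgebra.single_pow, one_pow]
            have hsingle : MonoidAlgebra.single g (1 : F)
                = MonoidAlgebra.single g₀ 1 * t ^ j := by
              rw [htj, MonoidAlgebra.single_mul_single, one_mul, hg]
            calc MonoidAlgebra.single g (1 : F) - MonoidAlgebra.single g₀ 1
                = MonoidAlgebra.single g₀ 1 * (t ^ j - 1) := by
                  rw [hsingle, mul_sub, mul_one]
            _ = MonoidAlgebra.single g₀ 1 * ((t - 1) * (∑ i ∈ Finset.range j, t ^ i)) := by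
                  rw [hgeo]
            _ = (t - 1) * (MonoidAlgebra.single g₀ 1 * (∑ i ∈ Finset.range j, t ^ i)) := by
                  rw [← mul_assoc, ← ((htc (MonoidAlgebra.single g₀ 1)).sub_left
                    (Commute.one_left _)).eq, mul_assoc]
          | add y1 y2 h1 h2 =>
            obtain ⟨a1, ha1⟩ := h1
            obtain ⟨a2, ha2⟩ := h2
            refine ⟨a1 + a2, ?_⟩
            rw [map_add, hS_add, mul_add, ← ha1, ← ha2]
            abel
          | smul r y hy =>
            obtain ⟨a, ha⟩ := hy
            refine ⟨r • a, ?_⟩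
            rw [map_smul, hS_smul, ← smul_sub, ha, mul_smul_comm]
        intro y hy
        obtain ⟨a, ha⟩ := key y
        rw [hy, hS_zero, sub_zero] at ha
        exact ⟨a, ha⟩
      obtain ⟨a, ha⟩ := hker (x ^ m) hπxm
      haveI : CharP (MonoidAlgebra F G) p := charP_of_injective_algebraMap' F p
      have htp : t ^ p = 1 := by
        rw [ht, MonoidAlgebra.single_pow, one_pow, hzp, MonoidAlgebra.one_def]
      have ht1 : (t - 1 : MonoidAlgebra F G) ^ p = 0 := by
        rw [sub_pow_char_of_commute p (Commute.one_right t), htp, one_pow, sub_self]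
      refine ⟨m * p, ?_⟩
      rw [pow_mul, ha, ((htc a).sub_left (Commute.one_left a)).mul_pow, ht1, zero_mul]

lemma isUnit_of_aug_ne_zero (p : ℕ) (hp : p.Prime) (F : Type*) [Field F] [CharP F p]
    (G : Type*) [Group G] [Fintype G] (hG : IsPGroup p G)
    (x : MonoidAlgebra F G) (hx : aug F G x ≠ 0) : IsUnit x := by
  set c := aug F G x with hc
  set e : MonoidAlgebra F G := algebraMap F (MonoidAlgebra F G) c with he
  have h1 : aug F G (x - e) = 0 := by
    rw [map_sub, AlgHom.commutes, Algebra.algebraMap_self_apply, ← hc, sub_self]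
  have h2 : IsNilpotent (x - e) :=
    nil_of_aug_eq_zero p hp F (Fintype.card G) G le_rfl hG _ h1
  have h3 : IsUnit e := (isUnit_iff_ne_zero.mpr hx).map (algebraMap F (MonoidAlgebra F G))
  have h4' : Commute e (x - e) := Algebra.commutes c (x - e)
  have h5 : IsUnit (e + (x - e)) := h2.isUnit_add_left_of_commute h3 h4'.symm
  have h6 : e + (x - e) = x := by abel
  rwa [h6] at h5

/-- for `p` odd, the Cayley map `f(x) = (1-x)(1+x)⁻¹` is a bijection
between the set `FG⁻_◇` of skew-symmetric elements and the `◇`-unitary subgroup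
`V_◇(FG)`. -/
theorem cayley_bijOn_skew_unitary
    (p : ℕ) (hp : p.Prime) (hodd : Odd p)
    (F : Type*) [Field F] [Fintype F] [CharP F p]
    (G : Type*) [Group G] [Fintype G] (hG : IsPGroup p G)
    (σ : G → G) (hanti : ∀ a b : G, σ (a * b) = σ b * σ a) (hinv : ∀ g, σ (σ g) = g) :
    Set.BijOn (fun x : MonoidAlgebra F G => (1 - x) * Ring.inverse (1 + x))
      {y : MonoidAlgebra F G | dia σ y = -y}
      {x : MonoidAlgebra F G | aug F G x = 1 ∧ x * dia σ x = 1 ∧ dia σ x * x = 1} := by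
  haveI : Fact p.Prime := ⟨hp⟩
  have hpne2 : p ≠ 2 := by
    intro h
    rw [h] at hodd
    exact (by norm_num : ¬ Odd 2) hodd
  have h2F : (2 : F) ≠ 0 := by
    intro h
    have h2 : ((2 : ℕ) : F) = 0 := by exact_mod_cast h
    have hdvd := (CharP.cast_eq_zero_iff F p 2).mp h2
    exact hpne2 ((Nat.prime_dvd_prime_iff_eq hp Nat.prime_two).mp hdvd)
  have h2R : IsUnit (2 : MonoidAlgebra F G) := by
    have hu : IsUnit ((algebraMap F (MonoidAlgebra F G)) 2) :=
      (isUnit_iff_ne_zero.mpr h2F).map _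
    rwa [map_ofNat] at hu
  -- skew elements have augmentation zero
  have hskew0 : ∀ y : MonoidAlgebra F G, dia σ y = -y → aug F G y = 0 := by
    intro y hy
    have h2 : aug F G (dia σ y) = aug F G y := aug_mapDomain σ y
    have h3 : aug F G y = -aug F G y := by
      calc aug F G y = aug F G (dia σ y) := h2.symm
      _ = aug F G (-y) := by rw [hy]
      _ = -aug F G y := map_neg _ _
    have h4 : aug F G y + aug F G y = 0 := by
      nth_rewrite 2 [h3]
      exact add_neg_cancel _
    have h5 : (2 : F) * aug F G y = 0 := by rw [two_mul]; exact h4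
    rcases mul_eq_zero.mp h5 with h | h
    · exact absurd h h2F
    · exact h
  have hnil : ∀ y : MonoidAlgebra F G, aug F G y = 0 → IsNilpotent y := fun y hy =>
    nil_of_aug_eq_zero p hp F (Fintype.card G) G le_rfl hG y hy
  -- units of shape 1 + x for x unitary
  have hunitU : ∀ x : MonoidAlgebra F G, aug F G x = 1 → IsUnit (1 + x) := by
    intro x hx1
    apply isUnit_of_aug_ne_zero p hp F G hG
    rw [map_add, map_one, hx1]
    intro h
    exact h2F (by rw [← h]; norm_num)
  -- MapsTo skew → unitary
  have hmapsto1 : Set.MapsTo (fun x : MonoidAlgebra F G => (1 - x) * Ring.inverse (1 + x))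
      {y : MonoidAlgebra F G | dia σ y = -y}
      {x : MonoidAlgebra F G | aug F G x = 1 ∧ x * dia σ x = 1 ∧ dia σ x * x = 1} := by
    intro y hy
    have hy' : dia σ y = -y := hy
    have hu : IsUnit (1 + y) := (hnil y (hskew0 y hy')).isUnit_one_add
    simp only [Set.mem_setOf_eq]
    set v := Ring.inverse (1 + y) with hv
    have hv1 : (1 + y) * v = 1 := Ring.mul_inverse_cancel _ hu
    have hv2 : v * (1 + y) = 1 := Ring.inverse_mul_cancel _ hu
    have hdia1y : dia σ (1 + y) = 1 - y := by
      rw [dia_add, dia_one σ hanti, hy', ← sub_eq_add_neg]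
    have hdia1y' : dia σ (1 - y) = 1 + y := by
      rw [dia_sub, dia_one σ hanti, hy', sub_neg_eq_add]
    have hd1 : dia σ v * (1 - y) = 1 := by
      have h := congrArg (dia σ) hv1
      rwa [dia_mul σ hanti, hdia1y, dia_one σ hanti] at h
    have hd2 : (1 - y) * dia σ v = 1 := by
      have h := congrArg (dia σ) hv2
      rwa [dia_mul σ hanti, hdia1y, dia_one σ hanti] at h
    have hswap : ((1 : MonoidAlgebra F G) - y) * (1 + y) = (1 + y) * (1 - y) := by noncomm_ring
    have hvv : v * dia σ v = dia σ v * v := by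
      apply invUnique (a := (1 - y) * (1 + y))
      · calc v * dia σ v * ((1 - y) * (1 + y))
            = v * ((dia σ v * (1 - y)) * (1 + y)) := by
              rw [mul_assoc, ← mul_assoc (dia σ v)]
        _ = v * (1 + y) := by rw [hd1, one_mul]
        _ = 1 := hv2
      · calc (1 - y) * (1 + y) * (dia σ v * v)
            = (1 + y) * (1 - y) * (dia σ v * v) := by rw [hswap]
        _ = (1 + y) * (((1 - y) * dia σ v) * v) := by
              rw [mul_assoc, ← mul_assoc (1 - y)]
        _ = (1 + y) * v := by rw [hd2, one_mul]
        _ = 1 := hv1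
    have hdx : dia σ ((1 - y) * v) = dia σ v * (1 + y) := by
      rw [dia_mul σ hanti, hdia1y']
    refine ⟨?_, ?_, ?_⟩
    · have haugv : aug F G v = 1 := by
        have h := congrArg (aug F G) hv1
        rwa [map_mul, map_one, map_add, map_one, hskew0 y hy', add_zero, one_mul] at h
      rw [map_mul, map_sub, map_one, hskew0 y hy', sub_zero, one_mul, haugv]
    · rw [hdx]
      calc (1 - y) * v * (dia σ v * (1 + y))
          = (1 - y) * ((v * dia σ v) * (1 + y)) := by rw [mul_assoc, ← mul_assoc v]
      _ = (1 - y) * ((dia σ v * v) * (1 + y)) := by rw [hvv]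
      _ = ((1 - y) * dia σ v) * (v * (1 + y)) := by
            rw [mul_assoc (dia σ v) v (1 + y), ← mul_assoc (1 - y) (dia σ v) _]
      _ = 1 := by rw [hd2, hv2, one_mul]
    · rw [hdx]
      calc dia σ v * (1 + y) * ((1 - y) * v)
          = dia σ v * (((1 + y) * (1 - y)) * v) := by
            rw [mul_assoc (dia σ v) (1 + y) _, ← mul_assoc (1 + y) (1 - y) v]
      _ = dia σ v * (((1 - y) * (1 + y)) * v) := by rw [hswap]
      _ = (dia σ v * (1 - y)) * ((1 + y) * v) := by
            rw [mul_assoc (1 - y) (1 + y) v, ← mul_assoc (dia σ v) (1 - y) _]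
      _ = 1 := by rw [hd1, hv1, one_mul]
  -- MapsTo unitary → skew
  have hmapsto2 : Set.MapsTo (fun x : MonoidAlgebra F G => (1 - x) * Ring.inverse (1 + x))
      {x : MonoidAlgebra F G | aug F G x = 1 ∧ x * dia σ x = 1 ∧ dia σ x * x = 1}
      {y : MonoidAlgebra F G | dia σ y = -y} := by
    intro x hx
    obtain ⟨hx1, hx2, hx3⟩ := hx
    have hu : IsUnit (1 + x) := hunitU x hx1
    simp only [Set.mem_setOf_eq]
    set v := Ring.inverse (1 + x) with hv
    have hv1 : (1 + x) * v = 1 := Ring.mul_inverse_cancel _ hu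
    have hv2 : v * (1 + x) = 1 := Ring.inverse_mul_cancel _ hu
    have hxv : Commute x v :=
      commute_of_inv ((Commute.one_right x).add_right (Commute.refl x)) hv1 hv2
    have hdiax : dia σ (1 + x) = 1 + dia σ x := by rw [dia_add, dia_one σ hanti]
    have hd1 : dia σ v * (1 + dia σ x) = 1 := by
      have h := congrArg (dia σ) hv1
      rwa [dia_mul σ hanti, hdiax, dia_one σ hanti] at h
    have e1 : (1 + dia σ x) * (x * v) = 1 := by
      calc (1 + dia σ x) * (x * v) = ((1 + dia σ x) * x) * v := (mul_assoc _ _ _).symm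
      _ = (x + dia σ x * x) * v := by rw [add_mul, one_mul]
      _ = (x + 1) * v := by rw [hx3]
      _ = (1 + x) * v := by rw [add_comm x 1]
      _ = 1 := hv1
    have hdv : dia σ v = x * v := invUnique hd1 e1
    have hxvx : x * v * dia σ x = v := by
      calc x * v * dia σ x = v * x * dia σ x := by rw [hxv.eq]
      _ = v * (x * dia σ x) := mul_assoc _ _ _
      _ = v := by rw [hx2, mul_one]
    show dia σ ((1 - x) * v) = -((1 - x) * v)
    calc dia σ ((1 - x) * v) = dia σ v * dia σ (1 - x) := dia_mul σ hanti _ _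
    _ = (x * v) * (1 - dia σ x) := by rw [hdv, dia_sub, dia_one σ hanti]
    _ = x * v - x * v * dia σ x := by rw [mul_sub, mul_one]
    _ = x * v - v := by rw [hxvx]
    _ = -((1 - x) * v) := by noncomm_ring
  -- the Cayley map is a self-inverse correspondence
  have hinvon : Set.InvOn
      (fun x : MonoidAlgebra F G => (1 - x) * Ring.inverse (1 + x))
      (fun x : MonoidAlgebra F G => (1 - x) * Ring.inverse (1 + x))
      {y : MonoidAlgebra F G | dia σ y = -y}
      {x : MonoidAlgebra F G | aug F G x = 1 ∧ x * dia σ x = 1 ∧ dia σ x * x = 1} := by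
    constructor
    · intro y hy
      have hy' : dia σ y = -y := hy
      exact cayley_invol h2R ((hnil y (hskew0 y hy')).isUnit_one_add)
    · intro x hx
      obtain ⟨hx1, _, _⟩ := hx
      exact cayley_invol h2R (hunitU x hx1)
  exact hinvon.bijOn hmapsto1 hmapsto2
end

section
/- Let F be a finite field of characteristic 2, G a finite 2-group, c ∈ G a central involution, and g ∈ G with g² ∉ {1, c}. Then in FG, (1 + α g (1+c))·(1 + α g (1+c))* = 1 + α(g + g^{-1})(1+c) for every α ∈ F, and this element is ≠ 1 whenever α ≠ 0. -/
/-- in characteristic `2`, for a central involution `c ∈ G` and `g ∈ G`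
with `g² ∉ {1, c}`, one has
`(1 + αg(1+c))·(1 + αg(1+c))* = 1 + α(g + g⁻¹)(1+c)` for all `α ∈ F`, and this
element is `≠ 1` whenever `α ≠ 0`. -/
theorem one_add_skew_product_identity
    (F : Type*) [Field F] [Fintype F] [CharP F 2]
    (G : Type*) [Group G] [Fintype G] (hG : IsPGroup 2 G)
    (c : G) (hc : c ∈ Subgroup.center G) (hc2 : c ^ 2 = 1) (hc1 : c ≠ 1)
    (g : G) (hg1 : g ^ 2 ≠ 1) (hgc : g ^ 2 ≠ c) (α : F) :
    (1 + α • (MonoidAlgebra.of F G g * (1 + MonoidAlgebra.of F G c))) *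
      dia (fun x : G => x⁻¹)
        (1 + α • (MonoidAlgebra.of F G g * (1 + MonoidAlgebra.of F G c))) =
      1 + α • ((MonoidAlgebra.of F G g + MonoidAlgebra.of F G g⁻¹) *
        (1 + MonoidAlgebra.of F G c)) ∧
    (α ≠ 0 →
      1 + α • ((MonoidAlgebra.of F G g + MonoidAlgebra.of F G g⁻¹) *
        (1 + MonoidAlgebra.of F G c)) ≠ 1) := by
  classical
  have hcen : ∀ x : G, c * x = x * c := fun x => (Subgroup.mem_center_iff.mp hc x).symm
  have hci : c⁻¹ = c := inv_eq_of_mul_eq_one_right (by rw [← pow_two, hc2])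
  have h2F : (2:F) = 0 := by exact_mod_cast CharP.cast_eq_zero F 2
  have hdbl : ∀ x : MonoidAlgebra F G, x + x = 0 := fun x => by
    rw [← two_smul F x, h2F, zero_smul]
  -- bridge lemmas between MonoidAlgebra and Finsupp operations
  have bma : ∀ x y : MonoidAlgebra F G,
      dia (fun x : G => x⁻¹) (x + y) =
      dia (fun x : G => x⁻¹) x + dia (fun x : G => x⁻¹) y :=
    fun _ _ => MonoidAlgebra.mapDomain_add _ _ _
  have bms : ∀ (a : G) (b : F),
      dia (fun x : G => x⁻¹) (MonoidAlgebra.single a b) =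
      MonoidAlgebra.single a⁻¹ b := fun _ _ => MonoidAlgebra.mapDomain_single
  have bsmul : ∀ (a : G) (b : F), α • MonoidAlgebra.single a b =
      MonoidAlgebra.single a (α * b) := fun a b => MonoidAlgebra.smul_single' α a b
  have bapp : ∀ (x y : MonoidAlgebra F G) (t : G), (x + y).coeff t = x.coeff t + y.coeff t :=
    fun x y t => Finsupp.add_apply _ _ t
  have bone : (1 : MonoidAlgebra F G) = MonoidAlgebra.single 1 1 := MonoidAlgebra.one_def
  constructor
  · have hdia : dia (fun x : G => x⁻¹)
        (1 + α • (MonoidAlgebra.of F G g * (1 + MonoidAlgebra.of F G c))) =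
        1 + α • (MonoidAlgebra.of F G g⁻¹ * (1 + MonoidAlgebra.of F G c)) := by
      simp only [MonoidAlgebra.of_apply, mul_add, mul_one,
        MonoidAlgebra.single_mul_single, one_mul, smul_add, bsmul, mul_one, bone,
        bma, bms, inv_one, mul_inv_rev, hci, hcen g⁻¹]
    rw [hdia]
    have hcc : MonoidAlgebra.of F G c * MonoidAlgebra.of F G c = 1 := by
      rw [← map_mul, ← pow_two, hc2, map_one]
    have hsq : ((1:MonoidAlgebra F G) + MonoidAlgebra.of F G c) *
        (1 + MonoidAlgebra.of F G c) = 0 := by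
      rw [mul_add, add_mul, add_mul, one_mul, mul_one, hcc, one_mul]
      calc (1:MonoidAlgebra F G) + MonoidAlgebra.of F G c + (MonoidAlgebra.of F G c + 1)
          = (1 + 1) + (MonoidAlgebra.of F G c + MonoidAlgebra.of F G c) := by abel
        _ = 0 := by rw [hdbl, hdbl, add_zero]
    have hcomm : MonoidAlgebra.of F G c * MonoidAlgebra.of F G g⁻¹
        = MonoidAlgebra.of F G g⁻¹ * MonoidAlgebra.of F G c := by
      simp only [MonoidAlgebra.of_apply, MonoidAlgebra.single_mul_single, one_mul, hcen]
    have expand : (MonoidAlgebra.of F G g * (1 + MonoidAlgebra.of F G c)) *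
        (MonoidAlgebra.of F G g⁻¹ * (1 + MonoidAlgebra.of F G c)) = 0 := by
      have hsw : (1 + MonoidAlgebra.of F G c) * MonoidAlgebra.of F G g⁻¹
          = MonoidAlgebra.of F G g⁻¹ * (1 + MonoidAlgebra.of F G c) := by
        rw [add_mul, mul_add, one_mul, mul_one, hcomm]
      calc (MonoidAlgebra.of F G g * (1 + MonoidAlgebra.of F G c)) *
        (MonoidAlgebra.of F G g⁻¹ * (1 + MonoidAlgebra.of F G c))
          = MonoidAlgebra.of F G g * (MonoidAlgebra.of F G g⁻¹ *
            ((1 + MonoidAlgebra.of F G c) * (1 + MonoidAlgebra.of F G c))) := by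
              rw [mul_assoc, ← mul_assoc (1 + MonoidAlgebra.of F G c), hsw, mul_assoc]
        _ = 0 := by rw [hsq]; simp
    have hzero : α • (MonoidAlgebra.of F G g * (1 + MonoidAlgebra.of F G c)) *
        (α • (MonoidAlgebra.of F G g⁻¹ * (1 + MonoidAlgebra.of F G c))) = 0 := by
      rw [smul_mul_assoc, mul_smul_comm, expand, smul_zero, smul_zero]
    rw [mul_add, add_mul, add_mul, one_mul, mul_one, hzero, add_zero, add_mul, smul_add,
      one_mul, add_assoc]
  · intro hα h
    have h0 : α • ((MonoidAlgebra.of F G g + MonoidAlgebra.of F G g⁻¹) *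
        (1 + MonoidAlgebra.of F G c)) = 0 := by
      have := congrArg (· - 1) h; simpa using this
    have hg' : (α • ((MonoidAlgebra.of F G g + MonoidAlgebra.of F G g⁻¹) *
        (1 + MonoidAlgebra.of F G c))).coeff g = 0 := by rw [h0]; rfl
    have h1 : ¬ (g * c = g) := fun h' =>
      hc1 (by simpa using mul_left_cancel (a := g) (by rw [h', mul_one]))
    have h2 : ¬ (g⁻¹ = g) := fun h' => hg1 (by
      rw [pow_two]; exact ((congrArg (fun x => x * g) h').symm).trans (inv_mul_cancel g))
    have h3 : ¬ (g⁻¹ * c = g) := fun h' => hgc (by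
      have := congrArg (fun x => g * x) h'.symm
      simpa [mul_inv_cancel_left, pow_two] using this)
    have bsingle : ∀ (a : G) (b : F), (MonoidAlgebra.single a b : MonoidAlgebra F G).coeff g =
        if a = g then b else 0 := fun a b => Finsupp.single_apply
    simp only [MonoidAlgebra.of_apply, add_mul, mul_add, one_mul, mul_one,
      MonoidAlgebra.single_mul_single, smul_add, bsmul, mul_one, bapp, bsingle,
      if_neg h1, if_neg h2, if_neg h3, if_pos rfl, add_zero, zero_add] at hg'
    exact hα hg'
end
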